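/- (Hall) For every real number x there exist real numbers u and v such that x = u + v and every regular continued fraction partial quotient b_i of u with i ≥ 1 satisfies b_i ≤ 4, and every regular continued fraction partial quotient b_i of v with i ≥ 1 satisfies b_i ≤ 4 (that is, ℝ = RCF_4 + RCF_4). -/

import Mathlib

/-- RCF iterates: `x₀ = x`, `x_{i+1} = 1/(x_i - ⌊x_i⌋)`. -/
noncomputable def rcfX (x : ℝ) : ℕ → ℝ
  | 0 => x
  | n + 1 => 1 / (rcfX x n - ⌊rcfX x n⌋)

/-- The `i`-th RCF partial quotient of `x`. -/
noncomputable def rcfDigit (x : ℝ) (i : ℕ) : ℤ := ⌊rcfX x i⌋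

/-- The `i`-th RCF partial quotient is genuinely defined: the algorithm has not
terminated before step `i`. -/
def rcfDefined (x : ℝ) (i : ℕ) : Prop :=
  ∀ m, m < i → rcfX x m ≠ (rcfDigit x m : ℝ)

/-- `RCFset r`: the reals all of whose RCF partial quotients `b_i` with `i ≥ 1`
satisfy `b_i ≤ r`. -/
def RCFset (r : ℤ) : Set ℝ :=
  {x | ∀ i : ℕ, 1 ≤ i → rcfDefined x i → rcfDigit x i ≤ r}

/-!
Let `F4 ⊆ [lo, hi]` be the set of the continued fractions `[0; a₁, a₂, …]` with all
`aᵢ ∈ {1, …, 4}`. Each cylinder `{[0; a₁, …, aₙ + x] : x ∈ [lo, hi]}` splits into four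
subcylinders separated by three gaps, and every gap is at most as long as either neighbouring
subcylinder: for `n = 0` this is a numerical check, and it survives the Möbius map
`x ↦ [0; a₁, …, aₙ + x]` because the distortion of that map is governed by a denominator that is
affine in `x` with nonnegative coefficients.

A compact set `K` with this property (Newhouse thickness at least one) satisfies
`[2 min K, 2 max K] ⊆ K + K`. If `t ∉ K + K`, the sets `K` and `t - K` are disjoint. A gap of one
of them into which a long bridge of the other one reaches yields, inside that bridge, a gap of the
other set with the same property lying further to the right. Iterating produces increasing
points lying alternately in the two sets, and their common limit lies in both closed sets.

Since `2 hi - 2 lo > 1`, every real number is an integer plus an element of `F4 + F4`, and `F4` is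
invariant under the Gauss map `x ↦ fract (1 / x)` with `⌊1 / x⌋ ≤ 4` on it.
-/

open Set Filter Topology Pointwise

/-- Newhouse thickness at least one, witnessed by a family `𝓑` of bridges `[b.1, b.2]` of `K`:
a point of a bridge outside `K` lies in a gap `(l.2, r.1)` between two sub-bridges `l`, `r` that
are each at least as long as the gap. -/
structure IsThick (K : Set ℝ) (𝓑 : Set (ℝ × ℝ)) : Prop where
  fst_mem : ∀ b ∈ 𝓑, b.1 ∈ K
  snd_mem : ∀ b ∈ 𝓑, b.2 ∈ K
  exists_gap : ∀ b ∈ 𝓑, ∀ z ∈ Icc b.1 b.2, z ∉ K → ∃ l ∈ 𝓑, ∃ r ∈ 𝓑,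
    b.1 ≤ l.1 ∧ r.2 ≤ b.2 ∧ l.2 < z ∧ z < r.1 ∧ r.1 - l.2 ≤ l.2 - l.1 ∧ r.1 - l.2 ≤ r.2 - r.1

namespace IsThick

variable {K X Y : Set ℝ} {𝓑 𝓑X 𝓑Y : Set (ℝ × ℝ)}

lemma reflect (hK : IsThick K 𝓑) (t : ℝ) :
    IsThick ((t - ·) ⁻¹' K) {b | (t - b.2, t - b.1) ∈ 𝓑} where
  fst_mem b hb := hK.snd_mem _ hb
  snd_mem b hb := hK.fst_mem _ hb
  exists_gap b hb z hz hzK := by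
    obtain ⟨l, hl, r, hr, hbl, hrb, hlz, hzr, hgl, hgr⟩ :=
      hK.exists_gap _ hb (t - z) ⟨by linarith [hz.2], by linarith [hz.1]⟩ hzK
    refine ⟨(t - r.2, t - r.1), by simpa using hr, (t - l.2, t - l.1), by simpa using hl, ?_⟩
    dsimp only
    refine ⟨?_, ?_, ?_, ?_, ?_, ?_⟩ <;> linarith

/-- The interval `g` ends where a bridge of the first family starts, and a bridge of the second
family starts inside `g`; both bridges are at least as long as `g`. -/
def Linked (𝓑X 𝓑Y : Set (ℝ × ℝ)) (g : ℝ × ℝ) : Prop :=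
  (∃ e, (g.2, e) ∈ 𝓑X ∧ g.2 - g.1 ≤ e - g.2) ∧
    ∃ c ∈ 𝓑Y, g.1 ≤ c.1 ∧ c.1 < g.2 ∧ g.2 - g.1 ≤ c.2 - c.1

lemma Linked.snd_mem (hX : IsThick X 𝓑X) {g : ℝ × ℝ} (h : Linked 𝓑X 𝓑Y g) : g.2 ∈ X :=
  let ⟨⟨_, he, _⟩, _⟩ := h; hX.fst_mem _ he

lemma Linked.exists_swap (hY : IsThick Y 𝓑Y) {g : ℝ × ℝ} (h : Linked 𝓑X 𝓑Y g) (hg : g.2 ∉ Y) :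
    ∃ g', Linked 𝓑Y 𝓑X g' ∧ g.2 < g'.2 := by
  obtain ⟨⟨e, he, hge⟩, c, hc, hgc, hcg, hlen⟩ := h
  obtain ⟨l, -, r, hr, hcl, -, hlg, hgr, hgl, hgr'⟩ :=
    hY.exists_gap c hc g.2 ⟨hcg.le, by linarith⟩ hg
  exact ⟨(l.2, r.1), ⟨⟨r.2, hr, hgr'⟩, (g.2, e), he, hlg.le, hgr, by dsimp only; linarith⟩, hgr⟩

lemma not_linked (hX : IsThick X 𝓑X) (hY : IsThick Y 𝓑Y) (hXc : IsClosed X) (hYc : IsClosed Y)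
    (hXb : BddAbove X) (hXY : Disjoint X Y) (g : ℝ × ℝ) : ¬ Linked 𝓑X 𝓑Y g := by
  have step : ∀ g, Linked 𝓑X 𝓑Y g → ∃ g', Linked 𝓑X 𝓑Y g' ∧ ∃ y ∈ Y, g.2 < y ∧ y < g'.2 := by
    intro g hg
    obtain ⟨g₁, hg₁, hlt₁⟩ :=
      hg.exists_swap hY (disjoint_left.1 hXY (hg.snd_mem hX))
    obtain ⟨g₂, hg₂, hlt₂⟩ :=
      hg₁.exists_swap hX (disjoint_right.1 hXY (hg₁.snd_mem hY))
    exact ⟨g₂, hg₂, g₁.2, hg₁.snd_mem hY, hlt₁, hlt₂⟩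
  intro hg
  choose! next hnext y hyY hy using step
  have hlink : ∀ n, Linked 𝓑X 𝓑Y (next^[n] g) := by
    intro n
    induction n with
    | zero => exact hg
    | succ n ih => rw [Function.iterate_succ_apply']; exact hnext _ ih
  set x : ℕ → ℝ := fun n => (next^[n] g).2
  have hxX : ∀ n, x n ∈ X := fun n => (hlink n).snd_mem hX
  have hxy : ∀ n, x n < y (next^[n] g) ∧ y (next^[n] g) < x (n + 1) := by
    intro n
    simp only [x, Function.iterate_succ_apply']
    exact hy _ (hlink n)
  have hmono : Monotone x := monotone_nat_of_le_succ fun n => ((hxy n).1.trans (hxy n).2).le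
  have hlim := tendsto_atTop_ciSup hmono (hXb.mono (range_subset_iff.2 hxX))
  have hlimY : Tendsto (fun n => y (next^[n] g)) atTop (𝓝 (⨆ n, x n)) :=
    tendsto_of_tendsto_of_tendsto_of_le_of_le hlim (hlim.comp (tendsto_add_atTop_nat 1))
      (fun n => (hxy n).1.le) (fun n => (hxy n).2.le)
  exact disjoint_left.1 hXY (hXc.mem_of_tendsto hlim (.of_forall hxX))
    (hYc.mem_of_tendsto hlimY (.of_forall fun n => hyY _ (hlink n)))

theorem Icc_subset_add (hK : IsThick K 𝓑) (hKc : IsCompact K) {a b : ℝ} (hab : (a, b) ∈ 𝓑) :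
    Icc (2 * a) (2 * b) ⊆ K + K := by
  intro t ht
  by_contra htK
  set Y := (t - ·) ⁻¹' K
  have hKY : Disjoint K Y :=
    disjoint_left.2 fun p hp hpY => htK ⟨p, hp, t - p, hpY, add_sub_cancel p t⟩
  have hY := hK.reflect t
  have hYc : IsClosed Y := hKc.isClosed.preimage (continuous_sub_left t)
  have hz : t / 2 ∉ K := fun h => htK ⟨t / 2, h, t / 2, h, add_halves t⟩
  obtain ⟨l, hl, r, hr, -, -, hlz, hzr, hgl, hgr⟩ :=
    hK.exists_gap _ hab (t / 2) ⟨by linarith [ht.1], by linarith [ht.2]⟩ hz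
  have hl' : (t - l.2, t - l.1) ∈ {b : ℝ × ℝ | (t - b.2, t - b.1) ∈ 𝓑} := by simpa using hl
  rcases lt_trichotomy t (l.2 + r.1) with hlt | heq | hgt
  · exact hK.not_linked hY hKc.isClosed hYc hKc.bddAbove hKY (l.2, r.1)
      ⟨⟨r.2, hr, hgr⟩, _, hl', by dsimp only; linarith, by dsimp only; linarith,
        by dsimp only; linarith⟩
  · refine disjoint_left.1 hKY (hK.fst_mem r hr) ?_
    simpa [Y, show t - r.1 = l.2 by linarith] using hK.snd_mem l hl
  · have hlink : Linked {b : ℝ × ℝ | (t - b.2, t - b.1) ∈ 𝓑} 𝓑 (t - r.1, t - l.2) :=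
      ⟨⟨t - l.1, hl', by dsimp only; linarith⟩, r, hr, by dsimp only; linarith,
        by dsimp only; linarith, by dsimp only; linarith⟩
    obtain ⟨g, hg, -⟩ := hlink.exists_swap hK (disjoint_right.1 hKY (hlink.snd_mem hY))
    exact hK.not_linked hY hKc.isClosed hYc hKc.bddAbove hKY g hg

end IsThick

namespace Hall

/-- `lo = [0; 4, 1, 4, 1, …]` and `hi = [0; 1, 4, 1, 4, …]` are the extreme points of `F4`. -/
noncomputable def lo : ℝ := (√2 - 1) / 2

noncomputable def hi : ℝ := 2 * (√2 - 1)

lemma sqrt_two_mem : √2 ∈ Icc 1.4142 1.4143 :=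
  ⟨(Real.le_sqrt (by norm_num) (by norm_num)).2 (by norm_num),
    (Real.sqrt_le_left (by norm_num)).2 (by norm_num)⟩

lemma lo_mem : lo ∈ Icc 0.2071 0.2072 := by
  obtain ⟨h₁, h₂⟩ := sqrt_two_mem
  constructor <;> unfold lo <;> linarith

lemma hi_mem : hi ∈ Icc 0.8284 0.8286 := by
  obtain ⟨h₁, h₂⟩ := sqrt_two_mem
  constructor <;> unfold hi <;> linarith

lemma lo_pos : 0 < lo := by linarith [lo_mem.1]

lemma lo_lt_hi : lo < hi := by linarith [lo_mem.2, hi_mem.1]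

lemma hi_lt_one : hi < 1 := by linarith [hi_mem.2]

lemma two_mul_lo_add_one_le : 2 * lo + 1 ≤ 2 * hi := by linarith [lo_mem.2, hi_mem.1]

/-- The inverse branches of the Gauss map. -/
noncomputable def branch (a : ℕ) (x : ℝ) : ℝ := (a + x)⁻¹

lemma branch_four_hi : branch 4 hi = lo := by
  have h₁ := sqrt_two_mem.1
  have h₂ := Real.sq_sqrt (show (0 : ℝ) ≤ 2 by norm_num)
  unfold branch hi lo
  rw [inv_eq_iff_eq_inv, inv_div, eq_div_iff (by linarith)]
  push_cast
  nlinarith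

lemma branch_one_lo : branch 1 lo = hi := by
  have h₁ := sqrt_two_mem.1
  have h₂ := Real.sq_sqrt (show (0 : ℝ) ≤ 2 by norm_num)
  unfold branch hi lo
  rw [inv_eq_iff_eq_inv, inv_eq_one_div, eq_div_iff (by linarith)]
  push_cast
  nlinarith

lemma branch_pos (a : ℕ) {x : ℝ} (hx : 0 < x) : 0 < branch a x := by
  unfold branch; positivity

lemma branch_strictAntiOn (a : ℕ) : StrictAntiOn (branch a) (Ioi 0) :=
  fun x hx _ _ hxy => inv_strictAnti₀ (by simp only [mem_Ioi] at hx; positivity) (by linarith)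

lemma continuousOn_branch (a : ℕ) : ContinuousOn (branch a) (Ioi 0) :=
  (continuousOn_const.add continuousOn_id).inv₀ fun x (hx : 0 < x) =>
    (show (0 : ℝ) < a + x by positivity).ne'

lemma branch_mem_Icc (a : ℕ) {x p q : ℝ} (hp : 0 < p) (hx : x ∈ Icc p q) :
    branch a x ∈ Icc (a + q)⁻¹ (a + p)⁻¹ :=
  ⟨inv_anti₀ (by linarith [hx.1]) (by linarith [hx.2]),
    inv_anti₀ (by positivity) (by linarith [hx.1])⟩

lemma branch_mapsTo {a : ℕ} (ha : a ∈ Icc 1 4) : MapsTo (branch a) (Icc lo hi) (Icc lo hi) := by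
  intro x hx
  have h₁ : (1 : ℝ) ≤ a := by exact_mod_cast ha.1
  have h₄ : (a : ℝ) ≤ 4 := by exact_mod_cast ha.2
  obtain ⟨hl, hu⟩ := branch_mem_Icc a lo_pos hx
  constructor
  · calc lo = (4 + hi)⁻¹ := by rw [← branch_four_hi, branch]; norm_num
      _ ≤ (a + hi)⁻¹ := inv_anti₀ (by linarith [lo_pos, lo_lt_hi]) (by linarith)
      _ ≤ branch a x := hl
  · calc branch a x ≤ (a + lo)⁻¹ := hu
      _ ≤ (1 + lo)⁻¹ := inv_anti₀ (by linarith [lo_pos]) (by linarith)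
      _ = hi := by rw [← branch_one_lo, branch]; norm_num

lemma mem_image_branch {a : ℕ} {u : ℝ} (hu : u ∈ Icc (branch a hi) (branch a lo)) :
    u ∈ branch a '' Icc lo hi := by
  have hu₀ : 0 < u := (branch_pos a (lo_pos.trans lo_lt_hi)).trans_le hu.1
  refine ⟨u⁻¹ - a, ⟨?_, ?_⟩, by simp [branch]⟩
  · have := inv_anti₀ hu₀ hu.2
    rw [branch, inv_inv] at this
    linarith
  · have := inv_anti₀ (branch_pos a (lo_pos.trans lo_lt_hi)) hu.1
    rw [branch, inv_inv] at this
    linarith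

lemma mem_image_branch_or_mem_gap {n : ℕ} (hn : 1 ≤ n) {u : ℝ} (hu : u ∈ Icc (branch n hi) hi) :
    (∃ c ∈ Icc 1 n, u ∈ branch c '' Icc lo hi) ∨
      ∃ a ∈ Ico 1 n, u ∈ Ioo (branch (a + 1) lo) (branch a hi) := by
  induction n, hn using Nat.le_induction with
  | base => exact .inl ⟨1, ⟨le_rfl, le_rfl⟩, mem_image_branch ⟨hu.1, branch_one_lo ▸ hu.2⟩⟩
  | succ n hn ih =>
    rcases le_or_gt u (branch (n + 1) lo) with h₁ | h₁
    · exact .inl ⟨n + 1, ⟨by omega, le_rfl⟩,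
        mem_image_branch ⟨by exact_mod_cast hu.1, by exact_mod_cast h₁⟩⟩
    rcases lt_or_ge u (branch n hi) with h₂ | h₂
    · exact .inr ⟨n, ⟨hn, by omega⟩, by exact_mod_cast h₁, h₂⟩
    rcases ih ⟨h₂, hu.2⟩ with ⟨c, hc, hcu⟩ | ⟨a, ha, hau⟩
    · exact .inl ⟨c, ⟨hc.1, hc.2.trans n.le_succ⟩, hcu⟩
    · exact .inr ⟨a, ⟨ha.1, ha.2.trans n.lt_succ_self⟩, hau⟩

/- The gap between the images of `[lo, hi]` under `branch (a + 1)` and `branch a` is at most as long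
as either image; for the right-hand image in the stronger, multiplicative form that survives the
distortion of `cfMap` (`abs_cfMap_sub_le_right`). -/
lemma gap_le_bridge_succ {a : ℕ} (ha : a ∈ Ico 1 4) :
    branch a hi - branch (a + 1) lo ≤ branch (a + 1) lo - branch (a + 1) hi := by
  have h₀ := branch_mem_Icc (a + 1) (by norm_num) hi_mem
  have h₁ := branch_mem_Icc (a + 1) (by norm_num) lo_mem
  have h₂ := branch_mem_Icc a (by norm_num) hi_mem
  obtain ⟨ha₁, ha₄⟩ := ha
  interval_cases a <;> norm_num at h₀ h₁ h₂ <;> linarith [h₀.2, h₁.1, h₂.2]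

lemma gap_mul_le_bridge_mul {a : ℕ} (ha : a ∈ Ico 1 4) :
    (branch a hi - branch (a + 1) lo) * branch a lo ≤
      (branch a lo - branch a hi) * branch (a + 1) lo := by
  have h₁ := branch_mem_Icc (a + 1) (by norm_num) lo_mem
  have h₂ := branch_mem_Icc a (by norm_num) hi_mem
  have h₃ := branch_mem_Icc a (by norm_num) lo_mem
  obtain ⟨ha₁, ha₄⟩ := ha
  interval_cases a <;> norm_num at h₁ h₂ h₃ <;>
    nlinarith [h₁.1, h₁.2, h₂.1, h₂.2, h₃.1, h₃.2]

/-- `cfMap [a₁, …, aₙ] x = [0; a₁, …, aₙ + x]`. -/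
noncomputable def cfMap (w : List ℕ) (x : ℝ) : ℝ := w.foldr branch x

/-- The denominator of `cfMap w x` as a Möbius function of `x`. -/
noncomputable def cfDenom : List ℕ → ℝ → ℝ
  | [], _ => 1
  | a :: w, x => (a + cfMap w x) * cfDenom w x

@[simp] lemma cfMap_nil (x : ℝ) : cfMap [] x = x := rfl

@[simp] lemma cfMap_cons (a : ℕ) (w : List ℕ) (x : ℝ) :
    cfMap (a :: w) x = branch a (cfMap w x) := rfl

lemma cfMap_append_singleton (w : List ℕ) (a : ℕ) (x : ℝ) :
    cfMap (w ++ [a]) x = cfMap w (branch a x) := by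
  simp [cfMap]

lemma cfMap_pos (w : List ℕ) {x : ℝ} (hx : 0 < x) : 0 < cfMap w x := by
  induction w with
  | nil => exact hx
  | cons a w ih => exact branch_pos a ih

lemma cfDenom_pos (w : List ℕ) {x : ℝ} (hx : 0 < x) : 0 < cfDenom w x := by
  induction w with
  | nil => exact one_pos
  | cons a w ih => exact mul_pos (by have := cfMap_pos w hx; positivity) ih

lemma continuousOn_cfMap (w : List ℕ) : ContinuousOn (cfMap w) (Ioi 0) := by
  induction w with
  | nil => exact continuousOn_id
  | cons a w ih =>
    exact (continuousOn_branch a).comp ih fun x hx => cfMap_pos w hx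

lemma cfMap_strictMonoOn_or_strictAntiOn (w : List ℕ) :
    StrictMonoOn (cfMap w) (Ioi 0) ∨ StrictAntiOn (cfMap w) (Ioi 0) := by
  induction w with
  | nil => exact .inl strictMonoOn_id
  | cons a w ih =>
    rcases ih with h | h
    · exact .inr ((branch_strictAntiOn a).comp_strictMonoOn h fun x hx => cfMap_pos w hx)
    · exact .inl ((branch_strictAntiOn a).comp h fun x hx => cfMap_pos w hx)

lemma abs_branch_sub (a : ℕ) {x y : ℝ} (hx : 0 < x) (hy : 0 < y) :
    |branch a y - branch a x| = |y - x| / ((a + x) * (a + y)) := by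
  have hax : (0 : ℝ) < a + x := by positivity
  have hay : (0 : ℝ) < a + y := by positivity
  rw [show branch a y - branch a x = (x - y) / ((a + x) * (a + y)) by
    unfold branch; field_simp; ring, abs_div, abs_sub_comm, abs_of_pos (mul_pos hax hay)]

lemma abs_cfMap_sub (w : List ℕ) {x y : ℝ} (hx : 0 < x) (hy : 0 < y) :
    |cfMap w y - cfMap w x| = |y - x| / (cfDenom w x * cfDenom w y) := by
  induction w with
  | nil => simp [cfDenom]
  | cons a w ih =>
    rw [cfMap_cons, cfMap_cons, abs_branch_sub a (cfMap_pos w hx) (cfMap_pos w hy), ih, div_div]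
    simp only [cfDenom]
    ring_nf

lemma exists_cfDenom_eq (w : List ℕ) :
    ∃ c d : ℝ, 0 ≤ c ∧ 0 ≤ d ∧ ∀ x, 0 < x → cfDenom w x = c * x + d := by
  suffices ∃ c d c' d' : ℝ, 0 ≤ c ∧ 0 ≤ d ∧ 0 ≤ c' ∧ 0 ≤ d' ∧ ∀ x, 0 < x →
      cfDenom w x = c * x + d ∧ cfMap w x * cfDenom w x = c' * x + d' by
    obtain ⟨c, d, c', d', hc, hd, -, -, h⟩ := this
    exact ⟨c, d, hc, hd, fun x hx => (h x hx).1⟩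
  induction w with
  | nil =>
    exact ⟨0, 1, 1, 0, le_rfl, zero_le_one, zero_le_one, le_rfl, fun x _ => by simp [cfDenom]⟩
  | cons a w ih =>
    obtain ⟨c, d, c', d', hc, hd, hc', hd', h⟩ := ih
    refine ⟨a * c + c', a * d + d', c, d, by positivity, by positivity, hc, hd, fun x hx => ?_⟩
    obtain ⟨h₁, h₂⟩ := h x hx
    have hax : (a : ℝ) + cfMap w x ≠ 0 := by have := cfMap_pos w hx; positivity
    constructor
    · simp only [cfDenom]
      linear_combination (a : ℝ) * h₁ + h₂
    · simp only [cfDenom, cfMap_cons, branch, ← mul_assoc, inv_mul_cancel₀ hax, one_mul, h₁]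

/- `cfDenom w` is affine with nonnegative coefficients, so both `cfDenom w` and `x / cfDenom w x`
are monotone: this bounds how much `cfMap w` distorts the ratio of adjacent intervals. -/
lemma cfDenom_le_cfDenom (w : List ℕ) {x y : ℝ} (hx : 0 < x) (hxy : x ≤ y) :
    cfDenom w x ≤ cfDenom w y := by
  obtain ⟨c, d, hc, -, h⟩ := exists_cfDenom_eq w
  rw [h x hx, h y (hx.trans_le hxy)]
  gcongr

lemma mul_cfDenom_le (w : List ℕ) {x y : ℝ} (hx : 0 < x) (hxy : x ≤ y) :
    x * cfDenom w y ≤ y * cfDenom w x := by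
  obtain ⟨c, d, -, hd, h⟩ := exists_cfDenom_eq w
  rw [h x hx, h y (hx.trans_le hxy)]
  nlinarith

lemma abs_cfMap_sub_le_left (w : List ℕ) {p₀ p₁ p₂ : ℝ} (h₀ : 0 < p₀) (h₀₁ : p₀ ≤ p₁)
    (h₁₂ : p₁ ≤ p₂) (h : p₂ - p₁ ≤ p₁ - p₀) :
    |cfMap w p₂ - cfMap w p₁| ≤ |cfMap w p₁ - cfMap w p₀| := by
  have h₁ := h₀.trans_le h₀₁
  have hD₀ := cfDenom_pos w h₀
  have hD₁ := cfDenom_pos w h₁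
  have hD₂ := cfDenom_pos w (h₁.trans_le h₁₂)
  have hD₀₂ := cfDenom_le_cfDenom w h₀ (h₀₁.trans h₁₂)
  rw [abs_cfMap_sub w h₁ (h₁.trans_le h₁₂), abs_cfMap_sub w h₀ h₁, abs_of_nonneg (by linarith),
    abs_of_nonneg (by linarith), div_le_div_iff₀ (by positivity) (by positivity)]
  calc (p₂ - p₁) * (cfDenom w p₀ * cfDenom w p₁)
      ≤ (p₁ - p₀) * (cfDenom w p₀ * cfDenom w p₁) := by gcongr
    _ ≤ (p₁ - p₀) * (cfDenom w p₁ * cfDenom w p₂) := by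
      rw [mul_comm (cfDenom w p₀)]; gcongr

lemma abs_cfMap_sub_le_right (w : List ℕ) {p₁ p₂ p₃ : ℝ} (h₁ : 0 < p₁) (h₁₂ : p₁ ≤ p₂)
    (h₂₃ : p₂ ≤ p₃) (h : (p₂ - p₁) * p₃ ≤ (p₃ - p₂) * p₁) :
    |cfMap w p₂ - cfMap w p₁| ≤ |cfMap w p₃ - cfMap w p₂| := by
  have h₂ := h₁.trans_le h₁₂
  have hD₁ := cfDenom_pos w h₁
  have hD₂ := cfDenom_pos w h₂
  have hD₃ := cfDenom_pos w (h₂.trans_le h₂₃)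
  have hD₁₃ := mul_cfDenom_le w h₁ (h₁₂.trans h₂₃)
  rw [abs_cfMap_sub w h₁ h₂, abs_cfMap_sub w h₂ (h₂.trans_le h₂₃), abs_of_nonneg (by linarith),
    abs_of_nonneg (by linarith), div_le_div_iff₀ (by positivity) (by positivity)]
  have key : (p₂ - p₁) * cfDenom w p₃ ≤ (p₃ - p₂) * cfDenom w p₁ := by
    refine le_of_mul_le_mul_left ?_ h₁
    nlinarith [mul_le_mul_of_nonneg_left hD₁₃ (sub_nonneg.2 h₁₂),
      mul_le_mul_of_nonneg_right h hD₁.le]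
  calc (p₂ - p₁) * (cfDenom w p₂ * cfDenom w p₃)
      = (p₂ - p₁) * cfDenom w p₃ * cfDenom w p₂ := by ring
    _ ≤ (p₃ - p₂) * cfDenom w p₁ * cfDenom w p₂ := by gcongr
    _ = (p₃ - p₂) * (cfDenom w p₁ * cfDenom w p₂) := by ring

lemma image_cfMap (w : List ℕ) : cfMap w '' Icc lo hi = uIcc (cfMap w lo) (cfMap w hi) := by
  have hsub : uIcc lo hi ⊆ Ioi 0 := by
    rw [uIcc_of_le lo_lt_hi.le]; exact fun x hx => lo_pos.trans_le hx.1
  rw [← uIcc_of_le lo_lt_hi.le]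
  rcases cfMap_strictMonoOn_or_strictAntiOn w with h | h
  · exact ((continuousOn_cfMap w).mono hsub).image_uIcc_of_monotoneOn (h.monotoneOn.mono hsub)
  · exact ((continuousOn_cfMap w).mono hsub).image_uIcc_of_antitoneOn (h.antitoneOn.mono hsub)

def Admissible (w : List ℕ) : Prop := ∀ a ∈ w, a ∈ Icc 1 4

lemma Admissible.append_singleton {w : List ℕ} (hw : Admissible w) {a : ℕ} (ha : a ∈ Icc 1 4) :
    Admissible (w ++ [a]) := by
  intro b hb
  rcases List.mem_append.1 hb with hb | hb
  · exact hw b hb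
  · exact List.mem_singleton.1 hb ▸ ha

lemma image_cfMap_append_subset {w : List ℕ} (a : ℕ) (ha : a ∈ Icc 1 4) :
    cfMap (w ++ [a]) '' Icc lo hi ⊆ cfMap w '' Icc lo hi := by
  rintro _ ⟨x, hx, rfl⟩
  exact ⟨branch a x, branch_mapsTo ha hx, (cfMap_append_singleton w a x).symm⟩

def level : ℕ → Set ℝ
  | 0 => Icc lo hi
  | n + 1 => ⋃ a ∈ Icc 1 4, branch a '' level n

/-- The set `{[0; a₁, a₂, …] : aᵢ ∈ {1, …, 4}}`, as the intersection of the finite unions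
`level n` of the cylinders of depth `n`. -/
def F4 : Set ℝ := ⋂ n, level n

lemma level_subset_Icc (n : ℕ) : level n ⊆ Icc lo hi := by
  cases n with
  | zero => exact subset_rfl
  | succ n =>
    exact iUnion₂_subset fun a ha =>
      (branch_mapsTo ha).image_subset.trans' (image_mono (level_subset_Icc n))

lemma level_antitone : Antitone level := by
  refine antitone_nat_of_succ_le fun n => ?_
  induction n with
  | zero => exact level_subset_Icc 1
  | succ n ih => exact iUnion₂_mono fun a _ => image_mono ih

lemma isCompact_level (n : ℕ) : IsCompact (level n) := by
  induction n with
  | zero => exact isCompact_Icc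
  | succ n ih =>
    refine (finite_Icc 1 4).isCompact_biUnion fun a _ => ih.image_of_continuousOn ?_
    exact (continuousOn_branch a).mono fun x hx => lo_pos.trans_le (level_subset_Icc n hx).1

lemma isCompact_F4 : IsCompact F4 :=
  (isCompact_level 0).of_isClosed_subset (isClosed_iInter fun n => (isCompact_level n).isClosed)
    (iInter_subset _ 0)

lemma F4_subset_Ico : F4 ⊆ Ico 0 1 := fun _ hx =>
  have h := level_subset_Icc 0 (mem_iInter.1 hx 0)
  ⟨lo_pos.le.trans h.1, h.2.trans_lt hi_lt_one⟩

lemma branch_mem_F4 {a : ℕ} (ha : a ∈ Icc 1 4) {x : ℝ} (hx : x ∈ F4) : branch a x ∈ F4 := by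
  refine mem_iInter.2 fun n => ?_
  cases n with
  | zero => exact branch_mapsTo ha (level_subset_Icc 0 (mem_iInter.1 hx 0))
  | succ n => exact mem_biUnion ha (mem_image_of_mem _ (mem_iInter.1 hx n))

lemma lo_mem_F4_and_hi_mem_F4 : lo ∈ F4 ∧ hi ∈ F4 := by
  suffices ∀ n, lo ∈ level n ∧ hi ∈ level n from
    ⟨mem_iInter.2 fun n => (this n).1, mem_iInter.2 fun n => (this n).2⟩
  intro n
  induction n with
  | zero => exact ⟨left_mem_Icc.2 lo_lt_hi.le, right_mem_Icc.2 lo_lt_hi.le⟩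
  | succ n ih =>
    exact ⟨branch_four_hi ▸ mem_biUnion (by norm_num) (mem_image_of_mem _ ih.2),
      branch_one_lo ▸ mem_biUnion (by norm_num) (mem_image_of_mem _ ih.1)⟩

lemma cfMap_mem_F4 {w : List ℕ} (hw : Admissible w) {x : ℝ} (hx : x ∈ F4) : cfMap w x ∈ F4 := by
  induction w with
  | nil => exact hx
  | cons a w ih =>
    rw [Admissible, List.forall_mem_cons] at hw
    exact branch_mem_F4 hw.1 (ih hw.2)

lemma image_cfMap_subset_level {w : List ℕ} (hw : Admissible w) :
    cfMap w '' Icc lo hi ⊆ level w.length := by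
  induction w with
  | nil => rintro _ ⟨x, hx, rfl⟩; exact hx
  | cons a w ih =>
    rw [Admissible, List.forall_mem_cons] at hw
    rintro _ ⟨x, hx, rfl⟩
    exact mem_biUnion hw.1 (mem_image_of_mem _ (ih hw.2 (mem_image_of_mem _ hx)))

/-- The cylinders `cfMap w '' [lo, hi]`, recorded by their endpoints in increasing order. -/
def bridges : Set (ℝ × ℝ) :=
  {b | b.1 ≤ b.2 ∧ ∃ w, Admissible w ∧
    (b = (cfMap w lo, cfMap w hi) ∨ b = (cfMap w hi, cfMap w lo))}

lemma lo_hi_mem_bridges : (lo, hi) ∈ bridges :=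
  ⟨lo_lt_hi.le, [], by simp [Admissible], .inl rfl⟩

lemma exists_Icc_eq_image_of_mem_bridges {b : ℝ × ℝ} (hb : b ∈ bridges) :
    ∃ w, Admissible w ∧ Icc b.1 b.2 = cfMap w '' Icc lo hi := by
  obtain ⟨hle, w, hw, rfl | rfl⟩ := hb
  · exact ⟨w, hw, by rw [image_cfMap, uIcc_of_le hle]⟩
  · exact ⟨w, hw, by rw [image_cfMap, uIcc_of_ge hle]⟩

lemma abs_cfMap_gap_le (w : List ℕ) {a : ℕ} (ha : a ∈ Ico 1 4)
    (h₁₂ : branch (a + 1) lo ≤ branch a hi) :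
    |cfMap w (branch a hi) - cfMap w (branch (a + 1) lo)| ≤
        |cfMap w (branch (a + 1) lo) - cfMap w (branch (a + 1) hi)| ∧
      |cfMap w (branch a hi) - cfMap w (branch (a + 1) lo)| ≤
        |cfMap w (branch a lo) - cfMap w (branch a hi)| :=
  ⟨abs_cfMap_sub_le_left w (branch_pos _ (lo_pos.trans lo_lt_hi))
      (branch_strictAntiOn _ lo_pos (lo_pos.trans lo_lt_hi) lo_lt_hi).le h₁₂
      (gap_le_bridge_succ ha),
    abs_cfMap_sub_le_right w (branch_pos _ lo_pos) h₁₂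
      (branch_strictAntiOn _ lo_pos (lo_pos.trans lo_lt_hi) lo_lt_hi).le
      (gap_mul_le_bridge_mul ha)⟩

lemma exists_gap_of_mem_Ioo {w : List ℕ} (hw : Admissible w) {a : ℕ} (ha : a ∈ Ico 1 4) {u : ℝ}
    (hu : u ∈ Ioo (branch (a + 1) lo) (branch a hi)) :
    ∃ l ∈ bridges, ∃ r ∈ bridges, l.1 ∈ cfMap w '' Icc lo hi ∧ r.2 ∈ cfMap w '' Icc lo hi ∧
      l.2 < cfMap w u ∧ cfMap w u < r.1 ∧ r.1 - l.2 ≤ l.2 - l.1 ∧ r.1 - l.2 ≤ r.2 - r.1 := by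
  have ha₁ : a + 1 ∈ Icc 1 4 := ⟨by omega, ha.2⟩
  have ha₂ : a ∈ Icc 1 4 := ⟨ha.1, ha.2.le⟩
  obtain ⟨hL, hR⟩ := abs_cfMap_gap_le w ha (hu.1.trans hu.2).le
  have hlo : lo ∈ Icc lo hi := left_mem_Icc.2 lo_lt_hi.le
  have hhi : hi ∈ Icc lo hi := right_mem_Icc.2 lo_lt_hi.le
  set f := cfMap w
  set p₀ := branch (a + 1) hi
  set p₁ := branch (a + 1) lo
  set p₂ := branch a hi
  set p₃ := branch a lo
  have hp₀ : p₀ ∈ Icc lo hi := branch_mapsTo ha₁ hhi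
  have hp₁ : p₁ ∈ Icc lo hi := branch_mapsTo ha₁ hlo
  have hp₂ : p₂ ∈ Icc lo hi := branch_mapsTo ha₂ hhi
  have hp₃ : p₃ ∈ Icc lo hi := branch_mapsTo ha₂ hlo
  have hpos : ∀ x ∈ Icc lo hi, x ∈ Ioi (0 : ℝ) := fun x hx => lo_pos.trans_le hx.1
  have hu' : u ∈ Icc lo hi := ⟨hp₁.1.trans hu.1.le, hu.2.le.trans hp₂.2⟩
  have h₀₁ : p₀ < p₁ := branch_strictAntiOn _ (hpos _ hlo) (hpos _ hhi) lo_lt_hi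
  have h₂₃ : p₂ < p₃ := branch_strictAntiOn _ (hpos _ hlo) (hpos _ hhi) lo_lt_hi
  have hw₁ := hw.append_singleton ha₁
  have hw₂ := hw.append_singleton ha₂
  have e₀ : cfMap (w ++ [a + 1]) hi = f p₀ := cfMap_append_singleton w _ _
  have e₁ : cfMap (w ++ [a + 1]) lo = f p₁ := cfMap_append_singleton w _ _
  have e₂ : cfMap (w ++ [a]) hi = f p₂ := cfMap_append_singleton w _ _
  have e₃ : cfMap (w ++ [a]) lo = f p₃ := cfMap_append_singleton w _ _
  rcases cfMap_strictMonoOn_or_strictAntiOn w with hf | hf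
  · have q₀₁ := hf (hpos _ hp₀) (hpos _ hp₁) h₀₁
    have q₁u := hf (hpos _ hp₁) (hpos _ hu') hu.1
    have qu₂ := hf (hpos _ hu') (hpos _ hp₂) hu.2
    have q₂₃ := hf (hpos _ hp₂) (hpos _ hp₃) h₂₃
    rw [abs_of_pos (by linarith), abs_of_pos (by linarith)] at hL hR
    exact ⟨(f p₀, f p₁), ⟨q₀₁.le, _, hw₁, .inr (by rw [e₀, e₁])⟩, (f p₂, f p₃),
      ⟨q₂₃.le, _, hw₂, .inr (by rw [e₂, e₃])⟩, mem_image_of_mem _ hp₀, mem_image_of_mem _ hp₃,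
      q₁u, qu₂, hL, hR⟩
  · have q₀₁ := hf (hpos _ hp₀) (hpos _ hp₁) h₀₁
    have q₁u := hf (hpos _ hp₁) (hpos _ hu') hu.1
    have qu₂ := hf (hpos _ hu') (hpos _ hp₂) hu.2
    have q₂₃ := hf (hpos _ hp₂) (hpos _ hp₃) h₂₃
    rw [abs_sub_comm, abs_of_pos (by linarith), abs_sub_comm, abs_of_pos (by linarith)] at hL
    rw [abs_sub_comm, abs_of_pos (by linarith), abs_sub_comm, abs_of_pos (by linarith)] at hR
    exact ⟨(f p₃, f p₂), ⟨q₂₃.le, _, hw₂, .inl (by rw [e₂, e₃])⟩, (f p₁, f p₀),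
      ⟨q₀₁.le, _, hw₁, .inl (by rw [e₀, e₁])⟩, mem_image_of_mem _ hp₃, mem_image_of_mem _ hp₀,
      qu₂, q₁u, by dsimp only; linarith, by dsimp only; linarith⟩

lemma exists_gap_of_notMem_level {z : ℝ} (k : ℕ) {w : List ℕ} (hw : Admissible w)
    (hz : z ∈ cfMap w '' Icc lo hi) (hzk : z ∉ level (w.length + k)) :
    ∃ l ∈ bridges, ∃ r ∈ bridges, l.1 ∈ cfMap w '' Icc lo hi ∧ r.2 ∈ cfMap w '' Icc lo hi ∧
      l.2 < z ∧ z < r.1 ∧ r.1 - l.2 ≤ l.2 - l.1 ∧ r.1 - l.2 ≤ r.2 - r.1 := by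
  induction k generalizing w with
  | zero => exact absurd (image_cfMap_subset_level hw hz) hzk
  | succ k ih =>
    obtain ⟨u, hu, rfl⟩ := hz
    have hu' : u ∈ Icc (branch 4 hi) hi := branch_four_hi ▸ hu
    rcases mem_image_branch_or_mem_gap (by norm_num) hu' with ⟨c, hc, y, hy, rfl⟩ | ⟨a, ha, hua⟩
    · have hsub := image_cfMap_append_subset (w := w) c hc
      obtain ⟨l, hl, r, hr, hl₁, hr₂, h⟩ := ih (hw.append_singleton hc)
        ⟨y, hy, cfMap_append_singleton w c y⟩
        (by rwa [List.length_append, List.length_singleton, add_assoc, add_comm 1 k])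
      exact ⟨l, hl, r, hr, hsub hl₁, hsub hr₂, h⟩
    · exact exists_gap_of_mem_Ioo hw ha hua

theorem isThick_F4 : IsThick F4 bridges where
  fst_mem b hb := by
    obtain ⟨-, w, hw, rfl | rfl⟩ := hb
    exacts [cfMap_mem_F4 hw lo_mem_F4_and_hi_mem_F4.1, cfMap_mem_F4 hw lo_mem_F4_and_hi_mem_F4.2]
  snd_mem b hb := by
    obtain ⟨-, w, hw, rfl | rfl⟩ := hb
    exacts [cfMap_mem_F4 hw lo_mem_F4_and_hi_mem_F4.2, cfMap_mem_F4 hw lo_mem_F4_and_hi_mem_F4.1]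
  exists_gap b hb z hz hzF := by
    obtain ⟨w, hw, hb⟩ := exists_Icc_eq_image_of_mem_bridges hb
    obtain ⟨N, hN⟩ : ∃ N, z ∉ level N := by simpa [F4] using hzF
    obtain ⟨l, hl, r, hr, hl₁, hr₂, h⟩ := exists_gap_of_notMem_level N hw (hb ▸ hz)
      fun h => hN (level_antitone (Nat.le_add_left N _) h)
    exact ⟨l, hl, r, hr, (hb ▸ hl₁).1, (hb ▸ hr₂).2, h⟩

lemma floor_inv_branch (a : ℕ) {y : ℝ} (hy : y ∈ Icc lo hi) : ⌊(branch a y)⁻¹⌋ = a := by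
  rw [branch, inv_inv, Int.floor_natCast_add,
    Int.floor_eq_zero_iff.2 ⟨lo_pos.le.trans hy.1, hy.2.trans_lt hi_lt_one⟩, add_zero]

lemma fract_inv_branch (a : ℕ) {y : ℝ} (hy : y ∈ Icc lo hi) : Int.fract (branch a y)⁻¹ = y := by
  rw [branch, inv_inv, Int.fract_natCast_add,
    Int.fract_eq_self.2 ⟨lo_pos.le.trans hy.1, hy.2.trans_lt hi_lt_one⟩]

lemma floor_inv_le_four {x : ℝ} (hx : x ∈ F4) : ⌊x⁻¹⌋ ≤ 4 := by
  obtain ⟨a, ha, y, hy, rfl⟩ : ∃ a ∈ Icc 1 4, ∃ y ∈ level 0, branch a y = x := by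
    simpa [level] using mem_iInter.1 hx 1
  rw [floor_inv_branch a hy]
  exact_mod_cast ha.2

lemma fract_inv_mem_F4 {x : ℝ} (hx : x ∈ F4) : Int.fract x⁻¹ ∈ F4 := by
  refine mem_iInter.2 fun n => ?_
  obtain ⟨a, -, y, hy, rfl⟩ : ∃ a ∈ Icc 1 4, ∃ y ∈ level n, branch a y = x := by
    simpa [level] using mem_iInter.1 hx (n + 1)
  rwa [fract_inv_branch a (level_subset_Icc n hy)]

lemma rcfX_succ (x : ℝ) (i : ℕ) : rcfX x (i + 1) = (Int.fract (rcfX x i))⁻¹ := by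
  rw [rcfX, one_div, Int.self_sub_floor]

lemma fract_rcfX_mem_F4 {x : ℝ} (hx : Int.fract x ∈ F4) (i : ℕ) : Int.fract (rcfX x i) ∈ F4 := by
  induction i with
  | zero => exact hx
  | succ i ih => rw [rcfX_succ]; exact fract_inv_mem_F4 ih

lemma mem_RCFset_of_fract_mem_F4 {x : ℝ} (hx : Int.fract x ∈ F4) : x ∈ RCFset 4 := by
  rintro (_ | i) hi -
  · omega
  · rw [rcfDigit, rcfX_succ]
    exact floor_inv_le_four (fract_rcfX_mem_F4 hx i)

end Hall

theorem rcf4_add_rcf4_eq_real (x : ℝ) :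
    ∃ u v : ℝ, x = u + v ∧ u ∈ RCFset 4 ∧ v ∈ RCFset 4 := by
  set t := 2 * Hall.lo + Int.fract (x - 2 * Hall.lo)
  have ht : t ∈ Icc (2 * Hall.lo) (2 * Hall.hi) :=
    ⟨by linarith [Int.fract_nonneg (x - 2 * Hall.lo)],
      by linarith [Int.fract_lt_one (x - 2 * Hall.lo), Hall.two_mul_lo_add_one_le]⟩
  obtain ⟨p, hp, q, hq, hpq⟩ := Hall.isThick_F4.Icc_subset_add Hall.isCompact_F4
    Hall.lo_hi_mem_bridges ht
  refine ⟨⌊x - 2 * Hall.lo⌋ + p, q, ?_, Hall.mem_RCFset_of_fract_mem_F4 ?_,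
    Hall.mem_RCFset_of_fract_mem_F4 ?_⟩
  · linarith [Int.floor_add_fract (x - 2 * Hall.lo)]
  · rwa [Int.fract_intCast_add, Int.fract_eq_self.2 (Hall.F4_subset_Ico hp)]
  · rwa [Int.fract_eq_self.2 (Hall.F4_subset_Ico hq)]
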